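/- arXiv:1311.0885 — 2 statements merged into one kernel-verified Lean document; each statement's English description precedes it below -/
import Mathlib

section
/- Fix M, L with 2L ≤ M and let H = M − 2L. Let δ₀ be the M×M canonical boundary operator over ZMod 2 with (δ₀) i j = 1 iff H ≤ i < H + L and j = i + L. Then for any matrix δ : Matrix (Fin M) (Fin M) (ZMod 2) with δ·δ = 0 and rank(δ) = L, the number of invertible matrices U with δ = U·δ₀·U⁻¹ equals the number of invertible matrices U with δ₀ = U·δ₀·U⁻¹; in particular this number is the same for all such δ. -/
/-!
A square-zero `δ` of rank `L` has `im δ ⊆ ker δ`. For a complement `C` of `ker δ` with basis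
`c₁, …, c_L`, the vectors `δ cᵢ` are independent and lie in `ker δ`, so they extend to a basis of
`ker δ`; in the resulting basis of the whole space `δ` acts as `δ₀`. Hence `δ = V δ₀ V⁻¹` for some
invertible `V`, and `U ↦ V⁻¹ U` is a bijection between the two sets being counted.
-/

open Matrix Module

namespace Module.Basis

variable {R M ι κ : Type*} [Ring R] [AddCommGroup M] [Module R M] {p q : Submodule R M}

noncomputable def ofIsCompl (h : IsCompl p q) (bp : Basis ι R p) (bq : Basis κ R q) :
    Basis (ι ⊕ κ) R M :=
  (bp.prod bq).map (Submodule.prodEquivOfIsCompl p q h)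

@[simp]
theorem ofIsCompl_apply_inl (h : IsCompl p q) (bp : Basis ι R p) (bq : Basis κ R q) (i : ι) :
    ofIsCompl h bp bq (Sum.inl i) = bp i := by
  simp [ofIsCompl, Basis.prod_apply]

@[simp]
theorem ofIsCompl_apply_inr (h : IsCompl p q) (bp : Basis ι R p) (bq : Basis κ R q) (j : κ) :
    ofIsCompl h bp bq (Sum.inr j) = bq j := by
  simp [ofIsCompl, Basis.prod_apply]

end Module.Basis

theorem LinearIndependent.exists_basis_sum_fin {K W : Type*} [DivisionRing K] [AddCommGroup W]
    [Module K W] [FiniteDimensional K W] {H L : ℕ} {v : Fin L → W} (hv : LinearIndependent K v)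
    (hW : finrank K W = H + L) :
    ∃ b : Basis (Fin H ⊕ Fin L) K W, ∀ c, b (Sum.inr c) = v c := by
  obtain ⟨T, hT⟩ := (Submodule.span K (Set.range v)).exists_isCompl
  have hT_rank : finrank K T = H := by
    have := Submodule.finrank_add_eq_of_isCompl hT
    rw [finrank_span_eq_card hv, Fintype.card_fin] at this
    omega
  refine ⟨Basis.ofIsCompl hT.symm (finBasisOfFinrankEq K T hT_rank) (Basis.span hv), fun c => ?_⟩
  simp [Basis.span_apply]

namespace LinearMap

variable {K V : Type*} [Field K] [AddCommGroup V] [Module K V] [FiniteDimensional K V]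
  {H L : ℕ} (f : V →ₗ[K] V)

theorem exists_basis_sum_of_range_le_ker (hf : range f ≤ ker f) (hL : finrank K (range f) = L)
    (hV : finrank K V = H + L + L) :
    ∃ b : Basis ((Fin H ⊕ Fin L) ⊕ Fin L) K V,
      (∀ x, f (b (Sum.inl x)) = 0) ∧ ∀ c, f (b (Sum.inr c)) = b (Sum.inl (Sum.inr c)) := by
  obtain ⟨C, hC⟩ := (ker f).exists_isCompl
  have hker_rank : finrank K (ker f) = H + L := by
    have := f.finrank_range_add_finrank_ker
    omega
  have hC_rank : finrank K C = L := by
    have := Submodule.finrank_add_eq_of_isCompl hC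
    omega
  let bC := finBasisOfFinrankEq K C hC_rank
  have hf_bC : LinearIndependent K fun c => f (bC c) :=
    bC.linearIndependent.map' (f ∘ₗ C.subtype) <| by
      rw [ker_comp, ← Submodule.disjoint_iff_comap_eq_bot]
      exact hC.disjoint.symm
  have hf_bC_ker : LinearIndependent K fun c => (⟨f (bC c), hf (mem_range_self f _)⟩ : ker f) :=
    hf_bC.of_comp (ker f).subtype
  obtain ⟨bK, hbK⟩ := hf_bC_ker.exists_basis_sum_fin hker_rank
  refine ⟨Basis.ofIsCompl hC bK bC, fun x => ?_, fun c => ?_⟩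
  · simp
  · simp [hbK]

theorem exists_basis_fin_of_range_le_ker (hf : range f ≤ ker f) (hL : finrank K (range f) = L)
    (hV : finrank K V = H + L + L) :
    ∃ B : Basis (Fin (H + L + L)) K V, ∀ j : Fin (H + L + L),
      f (B j) = if h : H + L ≤ (j : ℕ) then B ⟨j - L, by omega⟩ else 0 := by
  obtain ⟨b, hb_ker, hb_shift⟩ := f.exists_basis_sum_of_range_le_ker hf hL hV
  refine ⟨b.reindex ((finSumFinEquiv.sumCongr (Equiv.refl _)).trans finSumFinEquiv), fun j => ?_⟩
  induction j using Fin.addCases with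
  | left a =>
    induction a using Fin.addCases with
    | left a =>
      rw [dif_neg (by simp only [Fin.val_castAdd]; omega)]
      simp [hb_ker]
    | right a => simp [hb_ker]
  | right c =>
    have hidx : (⟨H + L + c - L, by omega⟩ : Fin (H + L + L)) = Fin.castAdd L (Fin.natAdd H c) :=
      Fin.ext (by simp only [Fin.val_castAdd, Fin.val_natAdd]; omega)
    simp [hb_shift, hidx]

end LinearMap

theorem Matrix.exists_isUnit_eq_mul_toMatrix_mul_inv {n K : Type*} [Fintype n] [DecidableEq n]
    [CommRing K] (δ : Matrix n n K) (B : Basis n K (n → K)) :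
    ∃ P : Matrix n n K, IsUnit P ∧ δ = P * LinearMap.toMatrix B B δ.mulVecLin * P⁻¹ := by
  let e := Pi.basisFun K n
  have := e.invertibleToMatrix B
  have hinv : (e.toMatrix B)⁻¹ = B.toMatrix e :=
    Matrix.inv_eq_right_inv (e.toMatrix_mul_toMatrix_flip B)
  refine ⟨e.toMatrix B, isUnit_of_invertible _, ?_⟩
  rw [hinv, basis_toMatrix_mul_linearMap_toMatrix_mul_basis_toMatrix,
    LinearMap.toMatrix_eq_toMatrix', ← Matrix.toLin'_apply', LinearMap.toMatrix'_toLin']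

theorem Matrix.exists_isUnit_conj_canonical {K : Type*} [Field K] (H L : ℕ)
    (δ₀ : Matrix (Fin (H + L + L)) (Fin (H + L + L)) K)
    (hδ₀ : ∀ i j : Fin (H + L + L), δ₀ i j =
      if H ≤ (i : ℕ) ∧ (i : ℕ) < H + L ∧ (j : ℕ) = (i : ℕ) + L then 1 else 0)
    (δ : Matrix (Fin (H + L + L)) (Fin (H + L + L)) K) (hδ : δ * δ = 0) (hrank : δ.rank = L) :
    ∃ P : Matrix (Fin (H + L + L)) (Fin (H + L + L)) K, IsUnit P ∧ δ = P * δ₀ * P⁻¹ := by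
  have hrange : LinearMap.range δ.mulVecLin ≤ LinearMap.ker δ.mulVecLin := by
    rintro _ ⟨x, rfl⟩
    rw [LinearMap.mem_ker, ← LinearMap.comp_apply, ← mulVecLin_mul, hδ, mulVecLin_zero,
      LinearMap.zero_apply]
  obtain ⟨B, hB⟩ :=
    δ.mulVecLin.exists_basis_fin_of_range_le_ker hrange hrank (finrank_fin_fun K)
  suffices LinearMap.toMatrix B B δ.mulVecLin = δ₀ from
    this ▸ δ.exists_isUnit_eq_mul_toMatrix_mul_inv B
  ext i j
  rw [LinearMap.toMatrix_apply, hB, hδ₀]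
  split_ifs <;> simp [Finsupp.single_apply, Fin.ext_iff] <;> omega

theorem Matrix.card_conjugators_eq_of_conj {n R : Type*} [Fintype n] [DecidableEq n] [CommRing R]
    {A B V : Matrix n n R} (hV : IsUnit V) (hB : B = V * A * V⁻¹) :
    Nat.card {U : Matrix n n R // IsUnit U ∧ B = U * A * U⁻¹} =
      Nat.card {U : Matrix n n R // IsUnit U ∧ A = U * A * U⁻¹} := by
  obtain ⟨v, rfl⟩ := hV
  refine Nat.card_congr ((v⁻¹).mulLeft.subtypeEquiv fun U => ?_)
  simp only [Units.mulLeft_apply, Units.isUnit_units_mul, and_congr_right_iff]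
  rintro ⟨u, rfl⟩
  simp only [hB, ← coe_units_inv, ← Units.val_mul, Units.eq_mul_inv_iff_mul_eq]
  rw [← Units.mul_right_inj v⁻¹]
  simp [mul_assoc]

/-- The number of invertible matrices `U` with `δ = U δ₀ U⁻¹` is the same for every
boundary operator `δ` of rank `L` (it equals the order of the normalizer of `δ₀`),
where `δ₀` is the canonical boundary operator with blocks of sizes `H, L, L` and the
identity in block position `(2,3)`. -/
theorem canonical_conjugation_count (M L H : ℕ) (hM : 2 * L ≤ M) (hH : H = M - 2 * L)
    (δ₀ : Matrix (Fin M) (Fin M) (ZMod 2))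
    (hδ₀ : ∀ i j : Fin M, δ₀ i j =
      if H ≤ (i : ℕ) ∧ (i : ℕ) < H + L ∧ (j : ℕ) = (i : ℕ) + L then 1 else 0)
    (δ : Matrix (Fin M) (Fin M) (ZMod 2)) (hδ : δ * δ = 0) (hrank : δ.rank = L) :
    Nat.card {U : Matrix (Fin M) (Fin M) (ZMod 2) // IsUnit U ∧ δ = U * δ₀ * U⁻¹} =
      Nat.card {U : Matrix (Fin M) (Fin M) (ZMod 2) // IsUnit U ∧ δ₀ = U * δ₀ * U⁻¹} := by
  obtain rfl : M = H + L + L := by omega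
  obtain ⟨V, hV, hconj⟩ := exists_isUnit_conj_canonical H L δ₀ hδ₀ δ hδ hrank
  exact card_conjugators_eq_of_conj hV hconj
end

section
/- Let M' ≤ M and let δ₁, δ₂ : Matrix (Fin M) (Fin M) (ZMod 2) satisfy δₐ·δₐ = 0 for a = 1, 2. Assume that for a = 1, 2: every v ∈ ker δₐ not in the column space of δₐ has wt(v) ≥ M − M' + 1, and every v ∈ ker δₐᵀ not in the column space of δₐᵀ has wt(v) ≥ M − M' + 1. If h : Matrix (Fin M) (Fin M) (ZMod 2) satisfies δ₁·h + h·δ₂ᵀ = 0 and h i j = 0 for all i, j with i < M' and j < M' (i.e., the reduced matrix of h vanishes), then h = δ₁·φ + φ·δ₂ᵀ for some M×M matrix φ. -/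
/-!
Under the trace pairing `⟨χ, ψ⟩ = trace (χᵀ ψ)` the adjoint of `φ ↦ δ₁ φ + φ δ₂ᵀ` is
`χ ↦ δ₁ᵀ χ + χ δ₂`, so a cycle `ψ` is a boundary as soon as it pairs to zero with every cocycle `χ`
of the transposed complex, and this pairing only depends on the cohomology class of `χ`.
A generalized inverse of `δ₁ᵀ` moves `χ` within its class to a matrix with columns in `ker δ₁ᵀ`
and rows in `ker δ₂ᵀ`. By the cleaning lemma, a vector of `ker δᵀ` can be changed by an element
of `im δᵀ` so as to vanish on any set of fewer than `d` coordinates, `d` the distance of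
`ker δ / im δ`. The change is left multiplication by one matrix `1 + δᵀ L`, which commutes with the
right action of `δ₂`; so we can clear the rows of index `≥ M'` and then, transposing, the columns.
The resulting representative lives on the reduced block, where `ψ` vanishes.
-/

open Matrix

/-- The weight of a vector over `ZMod 2`: its number of nonzero entries. -/
def wt {n : ℕ} (v : Fin n → ZMod 2) : ℕ :=
  (Finset.univ.filter fun i => v i ≠ 0).card

open Finset

section

variable {K V W : Type*} [Field K] [AddCommGroup V] [Module K V] [AddCommGroup W] [Module K W]

theorem LinearMap.mem_range_of_forall_dual_comp_eq_zero {f : V →ₗ[K] W} {w : W}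
    (h : ∀ φ : Module.Dual K W, φ ∘ₗ f = 0 → φ w = 0) : w ∈ LinearMap.range f := by
  rw [← Subspace.forall_mem_dualAnnihilator_apply_eq_zero_iff,
    ← LinearMap.ker_dualMap_eq_dualAnnihilator_range]
  exact h

theorem LinearMap.exists_comp_comp_eq_self (f : V →ₗ[K] W) :
    ∃ g : W →ₗ[K] V, f ∘ₗ g ∘ₗ f = f := by
  obtain ⟨s, hs⟩ := f.rangeRestrict.exists_rightInverse_of_surjective f.range_rangeRestrict
  obtain ⟨r, hr⟩ := (LinearMap.range f).subtype.exists_leftInverse_of_injective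
    (Submodule.ker_subtype _)
  refine ⟨s ∘ₗ r, LinearMap.ext fun v => ?_⟩
  have hr' : r (f v) = f.rangeRestrict v := LinearMap.congr_fun hr (f.rangeRestrict v)
  simpa [hr'] using congrArg Subtype.val (LinearMap.congr_fun hs (f.rangeRestrict v))

end

namespace Matrix

variable {m n p R K : Type*}

theorem exists_mul_mul_eq_self [Fintype m] [Fintype n] [DecidableEq m] [DecidableEq n] [Field K]
    (A : Matrix m n K) : ∃ G : Matrix n m K, A * G * A = A := by
  obtain ⟨g, hg⟩ := (toLin' A).exists_comp_comp_eq_self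
  refine ⟨LinearMap.toMatrix' g, toLin'.injective ?_⟩
  simpa [toLin'_mul, LinearMap.comp_assoc] using hg

theorem trace_transpose_mul_eq_sum [Fintype m] [Fintype n] [CommSemiring R]
    (A B : Matrix m n R) : trace (Aᵀ * B) = ∑ i, ∑ j, A i j * B i j := by
  simp only [trace, diag, mul_apply, transpose_apply]
  exact Finset.sum_comm

theorem eq_zero_of_forall_trace_transpose_mul_eq_zero [Fintype m] [Fintype n] [DecidableEq m]
    [DecidableEq n] [CommSemiring R] {A : Matrix m n R}
    (h : ∀ B : Matrix m n R, trace (Aᵀ * B) = 0) : A = 0 :=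
  ext fun i j => by
    simpa [trace_transpose_mul_eq_sum, single_apply, ite_and] using h (single i j 1)

theorem exists_dual_eq_trace_transpose_mul [Fintype m] [Fintype n] [DecidableEq m]
    [DecidableEq n] [CommSemiring R] (φ : Module.Dual R (Matrix m n R)) :
    ∃ A : Matrix m n R, ∀ B, φ B = trace (Aᵀ * B) := by
  refine ⟨of fun i j => φ (single i j 1), fun B => ?_⟩
  conv_lhs => rw [matrix_eq_sum_single B]
  simp only [map_sum, trace_transpose_mul_eq_sum, of_apply]
  refine Finset.sum_congr rfl fun i _ => Finset.sum_congr rfl fun j _ => ?_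
  rw [mul_comm, ← smul_eq_mul, ← map_smul, smul_single, smul_eq_mul, mul_one]

theorem mem_range_of_forall_trace_transpose_mul_eq_zero [Fintype m] [Fintype n] [DecidableEq m]
    [DecidableEq n] [Field K] {V : Type*} [AddCommGroup V] [Module K V]
    {f : V →ₗ[K] Matrix m n K} {B : Matrix m n K}
    (h : ∀ A : Matrix m n K, (∀ v, trace (Aᵀ * f v) = 0) → trace (Aᵀ * B) = 0) :
    B ∈ LinearMap.range f := by
  refine LinearMap.mem_range_of_forall_dual_comp_eq_zero fun φ hφ => ?_
  obtain ⟨A, hA⟩ := exists_dual_eq_trace_transpose_mul φ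
  rw [hA]
  exact h A fun v => by rw [← hA]; exact LinearMap.congr_fun hφ v

theorem exists_mul_eq_of_forall_col [Fintype n] [Semiring R] {A : Matrix m n R}
    {X : Matrix m p R} (h : ∀ j, ∃ u, A *ᵥ u = Xᵀ j) : ∃ U, A * U = X := by
  choose u hu using h
  exact ⟨(of u)ᵀ, ext fun i j => congrFun (hu j) i⟩

end Matrix

section ProductComplex

variable {n R : Type*} [Fintype n] [CommSemiring R]

def productBoundary (δ₁ δ₂ : Matrix n n R) : Matrix n n R →ₗ[R] Matrix n n R :=
  LinearMap.mulLeft R δ₁ + LinearMap.mulRight R δ₂ᵀ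

@[simp]
theorem productBoundary_apply (δ₁ δ₂ φ : Matrix n n R) :
    productBoundary δ₁ δ₂ φ = δ₁ * φ + φ * δ₂ᵀ := rfl

theorem trace_transpose_productBoundary_transpose_mul (δ₁ δ₂ χ ψ : Matrix n n R) :
    trace ((productBoundary δ₁ᵀ δ₂ᵀ χ)ᵀ * ψ) = trace (χᵀ * productBoundary δ₁ δ₂ ψ) := by
  simp only [productBoundary_apply, transpose_transpose, transpose_add, transpose_mul, add_mul,
    mul_add, trace_add, mul_assoc]
  rw [trace_mul_comm δ₂ᵀ]
  simp only [mul_assoc]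

theorem transpose_mul_transpose_eq_zero {δ : Matrix n n R} (h : δ * δ = 0) : δᵀ * δᵀ = 0 := by
  rw [← transpose_mul, h, transpose_zero]

theorem exists_cohomologous_transpose_mul_eq_zero_and_mul_eq_zero [DecidableEq n]
    {δ₁ δ₂ χ : Matrix n n (ZMod 2)} (h₁ : δ₁ * δ₁ = 0) (h₂ : δ₂ * δ₂ = 0)
    (hχ : productBoundary δ₁ᵀ δ₂ᵀ χ = 0) :
    ∃ η, δ₁ᵀ * (χ + productBoundary δ₁ᵀ δ₂ᵀ η) = 0 ∧ (χ + productBoundary δ₁ᵀ δ₂ᵀ η) * δ₂ = 0 := by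
  obtain ⟨s, hs⟩ := exists_mul_mul_eq_self δ₁ᵀ
  have hcomm : δ₁ᵀ * χ = χ * δ₂ := by
    rw [← sub_eq_zero, ZModModule.sub_eq_add]
    simpa using hχ
  have key : δ₁ᵀ * (s * χ * δ₂) = δ₁ᵀ * χ := by
    rw [mul_assoc s, ← hcomm, ← mul_assoc, ← mul_assoc, hs]
  refine ⟨s * χ, ?_, ?_⟩
  · simp only [productBoundary_apply, transpose_transpose, mul_add, ← mul_assoc δ₁ᵀ δ₁ᵀ,
      transpose_mul_transpose_eq_zero h₁, zero_mul, zero_add, key, ZModModule.add_self]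
  · simp only [productBoundary_apply, transpose_transpose, add_mul, mul_assoc _ δ₂ δ₂, h₂,
      mul_zero, add_zero, ← hcomm]
    rw [mul_assoc δ₁ᵀ, key, ZModModule.add_self]

end ProductComplex

section CoordProj

variable {ι R : Type*} [DecidableEq ι]

def coordProj [Zero R] [One R] (S : Finset ι) : Matrix ι ι R :=
  diagonal fun i => if i ∈ S then 1 else 0

theorem coordProj_transpose [Zero R] [One R] (S : Finset ι) :
    (coordProj S : Matrix ι ι R)ᵀ = coordProj S :=
  diagonal_transpose _

theorem trace_transpose_mul_eq_zero_of_coordProj_mul_eq_zero [Fintype ι] [CommSemiring R]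
    {S₁ S₂ : Finset ι} {χ ψ : Matrix ι ι R} (hrow : coordProj S₁ * χ = 0)
    (hcol : χ * coordProj S₂ = 0) (hψ : ∀ i ∉ S₁, ∀ j ∉ S₂, ψ i j = 0) :
    trace (χᵀ * ψ) = 0 := by
  rw [trace_transpose_mul_eq_sum]
  refine sum_eq_zero fun i _ => sum_eq_zero fun j _ => ?_
  by_cases hi : i ∈ S₁
  · rw [show χ i j = 0 by simpa [coordProj, diagonal_mul, hi] using congrFun₂ hrow i j, zero_mul]
  by_cases hj : j ∈ S₂
  · rw [show χ i j = 0 by simpa [coordProj, mul_diagonal, hj] using congrFun₂ hcol i j, zero_mul]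
  rw [hψ i hi j hj, mul_zero]

end CoordProj

def CycleDistanceGE {n : ℕ} (δ : Matrix (Fin n) (Fin n) (ZMod 2)) (d : ℕ) : Prop :=
  ∀ v, δ *ᵥ v = 0 → (¬ ∃ x, δ *ᵥ x = v) → d ≤ wt v

section Cleaning

variable {n d : ℕ} {δ : Matrix (Fin n) (Fin n) (ZMod 2)}

theorem wt_coordProj_mulVec_le (S : Finset (Fin n)) (v : Fin n → ZMod 2) :
    wt (coordProj S *ᵥ v) ≤ #S := by
  refine card_le_card fun i hi => ?_
  by_contra hiS
  simp [coordProj, mulVec_diagonal, hiS] at hi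

theorem CycleDistanceGE.exists_mul_eq {Z : Matrix (Fin n) (Fin n) (ZMod 2)}
    (hδ : CycleDistanceGE δ d) (hZ : δ * Z = 0) (hwt : ∀ j, wt (Zᵀ j) < d) : ∃ U, δ * U = Z :=
  exists_mul_eq_of_forall_col fun j => by
    by_contra hno
    exact absurd (hδ _ (congrFun (congrArg (·ᵀ) hZ) j) hno) (not_le.2 (hwt j))

theorem CycleDistanceGE.exists_coordProj_mul_transpose_mul_eq (hδ : CycleDistanceGE δ d)
    {S : Finset (Fin n)} (hS : #S < d) {X : Matrix (Fin n) (Fin n) (ZMod 2)} (hX : δᵀ * X = 0) :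
    ∃ Y, coordProj S * δᵀ * Y = coordProj S * X := by
  set E : Matrix (Fin n) (Fin n) (ZMod 2) := coordProj S
  refine mem_range_of_forall_trace_transpose_mul_eq_zero
    (f := LinearMap.mulLeft (ZMod 2) (E * δᵀ)) fun χ hχ => ?_
  have hker : δ * (E * χ) = 0 := eq_zero_of_forall_trace_transpose_mul_eq_zero fun Y => by
    simpa [E, transpose_mul, coordProj_transpose, mul_assoc] using hχ Y
  obtain ⟨U, hU⟩ := hδ.exists_mul_eq hker fun j => (wt_coordProj_mulVec_le S (χᵀ j)).trans_lt hS
  calc trace (χᵀ * (E * X)) = trace ((E * χ)ᵀ * X) := by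
        rw [transpose_mul, coordProj_transpose, mul_assoc]
    _ = trace (Uᵀ * (δᵀ * X)) := by rw [← hU, transpose_mul, mul_assoc]
    _ = 0 := by rw [hX, mul_zero, trace_zero]

theorem CycleDistanceGE.exists_cleaning_matrix (hδ : CycleDistanceGE δ d) {S : Finset (Fin n)}
    (hS : #S < d) : ∃ L, ∀ X, δᵀ * X = 0 → coordProj S * (X + δᵀ * (L * X)) = 0 := by
  obtain ⟨G, hG⟩ := exists_mul_mul_eq_self (coordProj S * δᵀ)
  refine ⟨G * coordProj S, fun X hX => ?_⟩
  obtain ⟨Y, hY⟩ := hδ.exists_coordProj_mul_transpose_mul_eq hS hX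
  calc coordProj S * (X + δᵀ * (G * coordProj S * X))
      = coordProj S * X + coordProj S * δᵀ * G * (coordProj S * δᵀ * Y) := by
        rw [hY]; simp only [mul_add, mul_assoc]
    _ = coordProj S * X + coordProj S * X := by rw [← mul_assoc, hG, hY]
    _ = 0 := ZModModule.add_self _

end Cleaning

section Cohomology

variable {n d₁ d₂ : ℕ} {δ₁ δ₂ : Matrix (Fin n) (Fin n) (ZMod 2)} {S₁ S₂ : Finset (Fin n)}

theorem exists_cohomologous_coordProj_mul_eq_zero_and_mul_coordProj_eq_zero
    (h₁ : δ₁ * δ₁ = 0) (h₂ : δ₂ * δ₂ = 0) (hδ₁ : CycleDistanceGE δ₁ d₁)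
    (hδ₂ : CycleDistanceGE δ₂ d₂) (hS₁ : #S₁ < d₁) (hS₂ : #S₂ < d₂)
    {χ : Matrix (Fin n) (Fin n) (ZMod 2)} (hχ : productBoundary δ₁ᵀ δ₂ᵀ χ = 0) :
    ∃ η, coordProj S₁ * (χ + productBoundary δ₁ᵀ δ₂ᵀ η) = 0 ∧
      (χ + productBoundary δ₁ᵀ δ₂ᵀ η) * coordProj S₂ = 0 := by
  obtain ⟨η₀, hl₁, hr₁⟩ := exists_cohomologous_transpose_mul_eq_zero_and_mul_eq_zero h₁ h₂ hχ
  generalize hχ₁ : χ + productBoundary δ₁ᵀ δ₂ᵀ η₀ = χ₁ at hl₁ hr₁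
  obtain ⟨L₁, hL₁⟩ := hδ₁.exists_cleaning_matrix hS₁
  obtain ⟨L₂, hL₂⟩ := hδ₂.exists_cleaning_matrix hS₂
  generalize hχ₂ : χ₁ + δ₁ᵀ * (L₁ * χ₁) = χ₂
  have hrow : coordProj S₁ * χ₂ = 0 := hχ₂ ▸ hL₁ χ₁ hl₁
  have hl₂ : δ₁ᵀ * χ₂ = 0 := by
    rw [← hχ₂, mul_add, ← mul_assoc, transpose_mul_transpose_eq_zero h₁, zero_mul, hl₁, add_zero]
  have hr₂ : χ₂ * δ₂ = 0 := by
    rw [← hχ₂, add_mul, hr₁, mul_assoc, mul_assoc, hr₁, mul_zero, mul_zero, add_zero]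
  have hcol : (χ₂ + χ₂ * L₂ᵀ * δ₂) * coordProj S₂ = 0 := by
    have := congrArg transpose (hL₂ χ₂ᵀ (by rw [← transpose_mul, hr₂, transpose_zero]))
    simpa [transpose_mul, coordProj_transpose, mul_assoc] using this
  have hχ₃ : χ + productBoundary δ₁ᵀ δ₂ᵀ (η₀ + L₁ * χ₁ + χ₂ * L₂ᵀ) = χ₂ + χ₂ * L₂ᵀ * δ₂ := by
    have e₁ : productBoundary δ₁ᵀ δ₂ᵀ (L₁ * χ₁) = δ₁ᵀ * (L₁ * χ₁) := by
      rw [productBoundary_apply, transpose_transpose, mul_assoc, hr₁, mul_zero, add_zero]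
    have e₂ : productBoundary δ₁ᵀ δ₂ᵀ (χ₂ * L₂ᵀ) = χ₂ * L₂ᵀ * δ₂ := by
      rw [productBoundary_apply, transpose_transpose, ← mul_assoc, hl₂, zero_mul, zero_add]
    rw [map_add, map_add, e₁, e₂, ← add_assoc, ← add_assoc, hχ₁, hχ₂]
  refine ⟨η₀ + L₁ * χ₁ + χ₂ * L₂ᵀ, ?_, hχ₃ ▸ hcol⟩
  rw [hχ₃, mul_add, hrow, ← mul_assoc, ← mul_assoc, hrow, zero_mul, zero_mul, add_zero]

theorem mem_range_productBoundary_of_eq_zero_on_compl (h₁ : δ₁ * δ₁ = 0) (h₂ : δ₂ * δ₂ = 0)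
    (hδ₁ : CycleDistanceGE δ₁ d₁) (hδ₂ : CycleDistanceGE δ₂ d₂) (hS₁ : #S₁ < d₁)
    (hS₂ : #S₂ < d₂) {ψ : Matrix (Fin n) (Fin n) (ZMod 2)} (hψ : productBoundary δ₁ δ₂ ψ = 0)
    (hψS : ∀ i ∉ S₁, ∀ j ∉ S₂, ψ i j = 0) :
    ψ ∈ LinearMap.range (productBoundary δ₁ δ₂) := by
  refine mem_range_of_forall_trace_transpose_mul_eq_zero fun χ hχ => ?_
  have hcocycle : productBoundary δ₁ᵀ δ₂ᵀ χ = 0 :=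
    eq_zero_of_forall_trace_transpose_mul_eq_zero fun φ => by
      rw [trace_transpose_productBoundary_transpose_mul]; exact hχ φ
  obtain ⟨η, hrow, hcol⟩ := exists_cohomologous_coordProj_mul_eq_zero_and_mul_coordProj_eq_zero
    h₁ h₂ hδ₁ hδ₂ hS₁ hS₂ hcocycle
  calc trace (χᵀ * ψ) = trace ((χ + productBoundary δ₁ᵀ δ₂ᵀ η)ᵀ * ψ) := by
        rw [transpose_add, add_mul, trace_add, trace_transpose_productBoundary_transpose_mul, hψ,
          mul_zero, trace_zero, add_zero]
    _ = 0 := trace_transpose_mul_eq_zero_of_coordProj_mul_eq_zero hrow hcol hψS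

end Cohomology

theorem Fin.card_filter_le_val (n m : ℕ) : #{i : Fin n | m ≤ (i : ℕ)} = n - m := by
  have := card_filter_add_card_filter_not (s := univ) fun i : Fin n => (i : ℕ) < m
  simp only [Fin.card_filter_val_lt, not_lt, card_univ, Fintype.card_fin] at this
  omega

theorem vanishing_reduced_matrix_implies_trivial_general (M M' : ℕ)
    (δ₁ δ₂ : Matrix (Fin M) (Fin M) (ZMod 2))
    (h₁ : δ₁ * δ₁ = 0) (h₂ : δ₂ * δ₂ = 0)
    (hZ₁ : ∀ v : Fin M → ZMod 2, δ₁.mulVec v = 0 →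
      (¬ ∃ x : Fin M → ZMod 2, δ₁.mulVec x = v) → M - M' + 1 ≤ wt v)
    (hZ₂ : ∀ v : Fin M → ZMod 2, δ₂.mulVec v = 0 →
      (¬ ∃ x : Fin M → ZMod 2, δ₂.mulVec x = v) → M - M' + 1 ≤ wt v) :
    ∀ h : Matrix (Fin M) (Fin M) (ZMod 2), δ₁ * h + h * δ₂ᵀ = 0 →
      (∀ i j : Fin M, (i : ℕ) < M' → (j : ℕ) < M' → h i j = 0) →
      ∃ φ : Matrix (Fin M) (Fin M) (ZMod 2), h = δ₁ * φ + φ * δ₂ᵀ := by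
  intro ψ hψ hred
  have hS : #{i : Fin M | M' ≤ (i : ℕ)} < M - M' + 1 := by
    rw [Fin.card_filter_le_val]; exact Nat.lt_succ_self _
  obtain ⟨φ, hφ⟩ := mem_range_productBoundary_of_eq_zero_on_compl h₁ h₂ hZ₁ hZ₂ hS hS hψ
    fun i hi j hj => hred i j (by simpa using hi) (by simpa using hj)
  exact ⟨φ, hφ.symm⟩

/-- If both input codes have distance at least `M − M' + 1`, then every cycle of the
product boundary map whose reduced matrix (top-left `M'×M'` submatrix) vanishes is a
boundary. -/
theorem vanishing_reduced_matrix_implies_trivial (M M' : ℕ) (hM' : M' ≤ M)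
    (δ₁ δ₂ : Matrix (Fin M) (Fin M) (ZMod 2))
    (h₁ : δ₁ * δ₁ = 0) (h₂ : δ₂ * δ₂ = 0)
    (hZ₁ : ∀ v : Fin M → ZMod 2, δ₁.mulVec v = 0 →
      (¬ ∃ x : Fin M → ZMod 2, δ₁.mulVec x = v) → M - M' + 1 ≤ wt v)
    (hX₁ : ∀ v : Fin M → ZMod 2, δ₁ᵀ.mulVec v = 0 →
      (¬ ∃ x : Fin M → ZMod 2, δ₁ᵀ.mulVec x = v) → M - M' + 1 ≤ wt v)
    (hZ₂ : ∀ v : Fin M → ZMod 2, δ₂.mulVec v = 0 →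
      (¬ ∃ x : Fin M → ZMod 2, δ₂.mulVec x = v) → M - M' + 1 ≤ wt v)
    (hX₂ : ∀ v : Fin M → ZMod 2, δ₂ᵀ.mulVec v = 0 →
      (¬ ∃ x : Fin M → ZMod 2, δ₂ᵀ.mulVec x = v) → M - M' + 1 ≤ wt v) :
    ∀ h : Matrix (Fin M) (Fin M) (ZMod 2), δ₁ * h + h * δ₂ᵀ = 0 →
      (∀ i j : Fin M, (i : ℕ) < M' → (j : ℕ) < M' → h i j = 0) →
      ∃ φ : Matrix (Fin M) (Fin M) (ZMod 2), h = δ₁ * φ + φ * δ₂ᵀ :=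
  vanishing_reduced_matrix_implies_trivial_general M M' δ₁ δ₂ h₁ h₂ hZ₁ hZ₂
end
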